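/- arXiv:2402.12073 — 7 statements merged into one kernel-verified Lean document; each statement's English description precedes it below -/
import Mathlib

section
/- Let G be an ordered abelian group with K-powers, let g₁, …, gℓ ∈ G with each gᵢ < 1, and let F be a generalized power series in ℓ variables with coefficients in ℝ and exponents in K≥0, whose support is contained in a product of ℓ well-ordered subsets of [0,∞). Then for each g ∈ G, the set of exponent tuples r = (r₁,…,rℓ) in the support of F with g₁^{r₁} ⋯ gℓ^{rℓ} = g is finite, and the resulting family of monomials g₁^{r₁}⋯gℓ^{rℓ} (r ∈ Supp F) has reverse well-ordered image in G; hence substitution F(g₁,…,gℓ) defines an element of the Hahn series field ℝ((G)). -/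
open OrderDual

/-!
Since every `gᵢ < 1`, the monomial map `r ↦ ∏ gᵢ ^ rᵢ` is strictly antitone for the
product order on exponent tuples, and by Dickson's lemma the support of `F`, contained in a
product of well-ordered sets, is partially well-ordered. A fibre of a strictly antitone map
is an antichain, hence finite in a partially well-ordered set; the image of a partially
well-ordered set under an antitone map is partially well-ordered for the reverse order,
which is the support condition for a Hahn series over `Gᵒᵈ`.
-/

/-- An ordered (multiplicative) abelian group with `K`-powers, where `K` is a subfield of `ℝ`. -/
structure KPowers (K : Subfield ℝ) (G : Type*) [CommGroup G] [LinearOrder G] [IsOrderedMonoid G] where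
  pow : G → K → G
  pow_zero : ∀ g : G, pow g 0 = 1
  pow_one : ∀ g : G, pow g 1 = g
  mul_pow : ∀ (g₁ g₂ : G) (r : K), pow (g₁ * g₂) r = pow g₁ r * pow g₂ r
  pow_le_pow : ∀ (g₁ g₂ : G) (r : K), (0 : ℝ) ≤ (r : ℝ) → g₁ ≤ g₂ → pow g₁ r ≤ pow g₂ r
  pow_add : ∀ (g : G) (r s : K), pow g (r + s) = pow g r * pow g s
  pow_mul : ∀ (g : G) (r s : K), pow (pow g r) s = pow g (r * s)

theorem Set.IsPWO.preimage_orderEmbedding {α β : Type*} [Preorder α] [Preorder β]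
    (e : α ↪o β) {s : Set β} (hs : s.IsPWO) : (e ⁻¹' s).IsPWO := by
  rw [Set.IsPWO, Set.partiallyWellOrderedOn_iff_exists_lt] at hs ⊢
  intro f hf
  obtain ⟨m, n, hmn, hle⟩ := hs (e ∘ f) hf
  exact ⟨m, n, hmn, e.le_iff_le.1 hle⟩

theorem Set.IsPWO.finite_fiber_of_strictAntiOn {α β : Type*} [PartialOrder α] [Preorder β]
    {s : Set α} (hs : s.IsPWO) {f : α → β} (hf : StrictAntiOn f s) (b : β) :
    {x ∈ s | f x = b}.Finite := by
  refine IsAntichain.finite_of_partiallyWellOrderedOn ?_ (hs.mono fun x hx => hx.1)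
  rintro x ⟨hxs, hxb⟩ y ⟨hys, hyb⟩ hne hxy
  exact (hf hxs hys (hxy.lt_of_ne hne)).ne (hyb.trans hxb.symm)

theorem HahnSeries.exists_coeff_eq_finsum_fiber {α Γ R : Type*} [PartialOrder Γ]
    [AddCommMonoid R] (a : α → R) (φ : α → Γ) (h : (φ '' Function.support a).IsPWO) :
    ∃ σ : HahnSeries Γ R, ∀ g, σ.coeff g = ∑ᶠ x ∈ {x | a x ≠ 0 ∧ φ x = g}, a x := by
  refine ⟨⟨fun g => ∑ᶠ x ∈ {x | a x ≠ 0 ∧ φ x = g}, a x, h.mono fun g hg => ?_⟩, fun g => rfl⟩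
  by_contra hgφ
  have hempty : {x | a x ≠ 0 ∧ φ x = g} = ∅ :=
    Set.eq_empty_of_forall_notMem fun x hx => hgφ ⟨x, hx⟩
  exact hg (by simp only [hempty, finsum_mem_empty])

namespace KPowers

variable {K : Subfield ℝ} {G : Type*} [CommGroup G] [LinearOrder G] [IsOrderedMonoid G]
  (P : KPowers K G)

theorem one_pow (r : K) : P.pow 1 r = 1 :=
  mul_left_cancel (a := P.pow 1 r) (by rw [← P.mul_pow, one_mul, mul_one])

theorem pow_lt_one {g : G} (hg : g < 1) {r : K} (hr : 0 < r) : P.pow g r < 1 := by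
  refine lt_of_le_of_ne ((P.pow_le_pow g 1 r hr.le hg.le).trans_eq (P.one_pow r)) fun h1 => ?_
  refine hg.ne ?_
  calc g = P.pow g (r * r⁻¹) := by rw [mul_inv_cancel₀ hr.ne', P.pow_one]
    _ = 1 := by rw [← P.pow_mul, h1, P.one_pow]

theorem pow_right_strictAnti {g : G} (hg : g < 1) : StrictAnti (P.pow g) := by
  intro r s hrs
  calc P.pow g s = P.pow g r * P.pow g (s - r) := by rw [← P.pow_add, add_sub_cancel]
    _ < P.pow g r := mul_lt_of_lt_one_right' _ (P.pow_lt_one hg (sub_pos.2 hrs))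

def monomial {ι : Type*} [Fintype ι] (gs : ι → G) (r : ι → K) : G :=
  ∏ i, P.pow (gs i) (r i)

theorem monomial_strictAnti {ι : Type*} [Fintype ι] {gs : ι → G} (hgs : ∀ i, gs i < 1) :
    StrictAnti (P.monomial gs) := by
  intro r s hrs
  obtain ⟨hle, j, hlt⟩ := Pi.lt_def.1 hrs
  exact Finset.prod_lt_prod' (fun i _ => (P.pow_right_strictAnti (hgs i)).antitone (hle i))
    ⟨j, Finset.mem_univ j, P.pow_right_strictAnti (hgs j) hlt⟩

end KPowers

theorem stmt2_general {K : Subfield ℝ} {G : Type*} [CommGroup G] [LinearOrder G] [IsOrderedMonoid G]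
    (P : KPowers K G) (ℓ : ℕ) (gs : Fin ℓ → G) (hgs : ∀ i, gs i < 1)
    (a : (Fin ℓ → K) → ℝ) (S : Fin ℓ → Set ℝ)
    (hSwf : ∀ i, (S i).WellFoundedOn (· < ·))
    (hsupp : ∀ r : Fin ℓ → K, a r ≠ 0 → ∀ i, (r i : ℝ) ∈ S i) :
    (∀ g : G, {r : Fin ℓ → K | a r ≠ 0 ∧ ∏ i, P.pow (gs i) (r i) = g}.Finite) ∧
    {g : G | ∃ r : Fin ℓ → K, a r ≠ 0 ∧ ∏ i, P.pow (gs i) (r i) = g}.WellFoundedOn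
      (· > ·) ∧
    ∃ σ : HahnSeries Gᵒᵈ ℝ, ∀ g : G,
      σ.coeff (toDual g) =
        ∑ᶠ r ∈ {r : Fin ℓ → K | a r ≠ 0 ∧ ∏ i, P.pow (gs i) (r i) = g}, a r := by
  have hS_pwo (i : Fin ℓ) : (OrderEmbedding.subtype (· ∈ K) ⁻¹' S i).IsPWO :=
    (Set.IsWF.isPWO (hSwf i)).preimage_orderEmbedding _
  have hsupp_pwo : (Function.support a).IsPWO :=
    (Set.IsPWO.pi hS_pwo).mono fun r hr i _ => hsupp r hr i
  have hanti := P.monomial_strictAnti hgs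
  have himage : (toDual ∘ P.monomial gs '' Function.support a).IsPWO :=
    hsupp_pwo.image_of_monotoneOn fun r _ s _ hrs => hanti.antitone hrs
  refine ⟨fun g => hsupp_pwo.finite_fiber_of_strictAntiOn (hanti.strictAntiOn _) g, ?_,
    HahnSeries.exists_coeff_eq_finsum_fiber a _ himage⟩
  -- `<` on `Gᵒᵈ` is `>` on `G`
  exact himage.isWF

/-- Substituting elements `gᵢ < 1` of `G` into a generalized power series `F`
(coefficient function `a`, exponents in `K≥0`, support in a product of well-ordered
subsets of `[0,∞)`): each fibre of the monomial map over `g ∈ G` is finite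
(Neumann's lemma), the image set of monomials is reverse well-ordered, and the
substitution defines an element of the Hahn field `ℝ((G))`. -/
theorem stmt2 {K : Subfield ℝ} {G : Type*} [CommGroup G] [LinearOrder G] [IsOrderedMonoid G]
    (P : KPowers K G) (ℓ : ℕ) (gs : Fin ℓ → G) (hgs : ∀ i, gs i < 1)
    (a : (Fin ℓ → K) → ℝ) (S : Fin ℓ → Set ℝ)
    (hSwf : ∀ i, (S i).WellFoundedOn (· < ·))
    (hSnn : ∀ i, S i ⊆ Set.Ici (0 : ℝ))
    (hsupp : ∀ r : Fin ℓ → K, a r ≠ 0 → ∀ i, (r i : ℝ) ∈ S i) :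
    (∀ g : G, {r : Fin ℓ → K | a r ≠ 0 ∧ ∏ i, P.pow (gs i) (r i) = g}.Finite) ∧
    {g : G | ∃ r : Fin ℓ → K, a r ≠ 0 ∧ ∏ i, P.pow (gs i) (r i) = g}.WellFoundedOn
      (· > ·) ∧
    ∃ σ : HahnSeries Gᵒᵈ ℝ, ∀ g : G,
      σ.coeff (toDual g) =
        ∑ᶠ r ∈ {r : Fin ℓ → K | a r ≠ 0 ∧ ∏ i, P.pow (gs i) (r i) = g}, a r :=
  stmt2_general P ℓ gs hgs a S hSwf hsupp
end

section
/- Let M be a multiplicative subgroup of the ring of germs at +∞ of real functions, consisting of germs with values in (0,∞), which is totally ordered by the valuation order (f ⪯ g iff f/g has a finite limit at +∞). Then M is also totally ordered by the pointwise (eventual) order, and the two orders coincide on M: for m, n ∈ M, m < n (eventually pointwise) if and only if m ≺ n (i.e. m/n → 0 at +∞). -/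
open Filter

private lemma zero_lt_eventually {m n : ℝ → ℝ} (hm : ∀ x, 0 < m x) (hn : ∀ x, 0 < n x)
    (h : Tendsto (fun x => m x / n x) atTop (nhds 0)) :
    ∀ᶠ x in atTop, m x < n x := by
  have h1 : ∀ᶠ x in atTop, m x / n x < 1 := h.eventually (gt_mem_nhds one_pos)
  filter_upwards [h1] with x hx
  exact (div_lt_one (hn x)).1 hx

private lemma tendsto_one_of_eq {m n : ℝ → ℝ} (hn : ∀ x, 0 < n x)
    (h : m =ᶠ[atTop] n) : Tendsto (fun x => m x / n x) atTop (nhds 1) := by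
  have : (fun x => m x / n x) =ᶠ[atTop] (fun _ => (1 : ℝ)) := by
    filter_upwards [h] with x hx
    simp [hx, div_self (hn x).ne']
  exact Tendsto.congr' this.symm tendsto_const_nhds

/-- For a group `M` of positive monomial germs at `+∞`, totally ordered (and
antisymmetric) with respect to the valuation order `⪯` (`f ⪯ g` iff `f/g` has a
finite limit at `+∞`), `M` is also totally ordered by the eventual pointwise
order, and the strict pointwise order coincides with `≺` (`m/n → 0`). -/
theorem stmt3 (M : Set (ℝ → ℝ))
    (hpos : ∀ m ∈ M, ∀ x : ℝ, 0 < m x)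
    (hone : (fun _ : ℝ => (1 : ℝ)) ∈ M)
    (hmul : ∀ m ∈ M, ∀ n ∈ M, (m * n) ∈ M)
    (hinv : ∀ m ∈ M, (fun x => (m x)⁻¹) ∈ M)
    (htotal : ∀ m ∈ M, ∀ n ∈ M,
      (∃ c : ℝ, Tendsto (fun x => m x / n x) atTop (nhds c)) ∨
      (∃ c : ℝ, Tendsto (fun x => n x / m x) atTop (nhds c)))
    (hantisymm : ∀ m ∈ M, ∀ n ∈ M,
      (∃ c : ℝ, c ≠ 0 ∧ Tendsto (fun x => m x / n x) atTop (nhds c)) →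
      m =ᶠ[atTop] n) :
    (∀ m ∈ M, ∀ n ∈ M, (∀ᶠ x in atTop, m x ≤ n x) ∨ (∀ᶠ x in atTop, n x ≤ m x)) ∧
    (∀ m ∈ M, ∀ n ∈ M,
      ((∀ᶠ x in atTop, m x < n x) ∧ ¬ m =ᶠ[atTop] n) ↔
        Tendsto (fun x => m x / n x) atTop (nhds 0)) := by
  constructor
  · intro m hm n hn
    rcases htotal m hm n hn with ⟨c, hc⟩ | ⟨c, hc⟩
    · by_cases h0 : c = 0
      · subst h0
        exact Or.inl ((zero_lt_eventually (hpos m hm) (hpos n hn) hc).mono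
          fun x hx => hx.le)
      · exact Or.inl ((hantisymm m hm n hn ⟨c, h0, hc⟩).mono fun x hx => hx.le)
    · by_cases h0 : c = 0
      · subst h0
        exact Or.inr ((zero_lt_eventually (hpos n hn) (hpos m hm) hc).mono
          fun x hx => hx.le)
      · exact Or.inr ((hantisymm n hn m hm ⟨c, h0, hc⟩).mono fun x hx => hx.le)
  · intro m hm n hn
    constructor
    · rintro ⟨hlt, hne⟩
      rcases htotal m hm n hn with ⟨c, hc⟩ | ⟨c, hc⟩
      · by_cases h0 : c = 0
        · subst h0; exact hc
        · exact absurd (hantisymm m hm n hn ⟨c, h0, hc⟩) hne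
      · have h1 : ∀ᶠ x in atTop, (1 : ℝ) ≤ n x / m x := by
          filter_upwards [hlt] with x hx
          exact ((one_lt_div (hpos m hm x)).2 hx).le
        have hc1 : (1 : ℝ) ≤ c := ge_of_tendsto hc h1
        have := hantisymm n hn m hm ⟨c, by linarith, hc⟩
        exact absurd this.symm hne
    · intro h
      refine ⟨zero_lt_eventually (hpos m hm) (hpos n hn) h, fun heq => ?_⟩
      have := tendsto_nhds_unique h (tendsto_one_of_eq (hpos n hn) heq)
      norm_num at this
end

section
/- With F and φ as in the Embedding Theorem (φ : F → ℝ((G)) defined by φ(m₀ a(m₁,…,mℓ)) = φ(m₀) · â(φ(m₁),…,φ(mℓ))), every f ∈ F admits a unique decomposition f = f_≻ + f_⪯ where φ(f_≻) has support entirely > 1 and φ(f_⪯) has support entirely ≤ 1, and both f_≻, f_⪯ lie in F. -/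
open Filter OrderDual

/-!
`f_≻` is the truncation of `f` at the monomial `1`, and `f_⪯ := f - f_≻`, which lies in `F`
because `F` is closed under negation and addition. Uniqueness already holds for Hahn series:
splitting a series along a partition of the monomials is unique, and `φ` is injective on germs.
-/

namespace HahnSeries

variable {Γ R : Type*} [PartialOrder Γ] [AddMonoid R]

theorem eq_and_eq_of_add_eq_add_of_coeff_ne_zero {a b c d : HahnSeries Γ R} (p : Γ → Prop)
    (hsum : a + b = c + d)
    (ha : ∀ i, a.coeff i ≠ 0 → p i) (hb : ∀ i, b.coeff i ≠ 0 → ¬p i)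
    (hc : ∀ i, c.coeff i ≠ 0 → p i) (hd : ∀ i, d.coeff i ≠ 0 → ¬p i) :
    a = c ∧ b = d := by
  have hcoeff (i : Γ) : a.coeff i + b.coeff i = c.coeff i + d.coeff i := by
    rw [← coeff_add, hsum, coeff_add]
  have zero_of_pos (i : Γ) (hp : p i) : b.coeff i = 0 ∧ d.coeff i = 0 :=
    ⟨by_contra fun h => hb i h hp, by_contra fun h => hd i h hp⟩
  have zero_of_neg (i : Γ) (hp : ¬p i) : a.coeff i = 0 ∧ c.coeff i = 0 :=
    ⟨by_contra fun h => hp (ha i h), by_contra fun h => hp (hc i h)⟩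
  constructor <;> ext i <;> by_cases hp : p i
  · simpa only [zero_of_pos i hp, add_zero] using hcoeff i
  · rw [(zero_of_neg i hp).1, (zero_of_neg i hp).2]
  · rw [(zero_of_pos i hp).1, (zero_of_pos i hp).2]
  · simpa only [zero_of_neg i hp, zero_add] using hcoeff i

end HahnSeries

theorem stmt9_general {G : Type*} [CommGroup G] [LinearOrder G]
    (F : Set (ℝ → ℝ)) (φ : (ℝ → ℝ) → HahnSeries Gᵒᵈ ℝ)
    (hinj : ∀ f ∈ F, ∀ g ∈ F, φ f = φ g → f =ᶠ[atTop] g)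
    (hadd : ∀ f ∈ F, ∀ g ∈ F, ∃ h ∈ F, h =ᶠ[atTop] (f + g) ∧ φ h = φ f + φ g)
    (hneg : ∀ f ∈ F, ∃ h ∈ F, h =ᶠ[atTop] (-f) ∧ φ h = -(φ f))
    (htrunc : ∀ f ∈ F, ∀ g : G, ∃ fg ∈ F, ∀ h : G,
      (φ fg).coeff (toDual h) = if g < h then (φ f).coeff (toDual h) else 0) :
    ∀ f ∈ F, ∃ f₁ ∈ F, ∃ f₂ ∈ F,
      f =ᶠ[atTop] (f₁ + f₂) ∧ φ f = φ f₁ + φ f₂ ∧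
      (∀ h : G, (φ f₁).coeff (toDual h) ≠ 0 → 1 < h) ∧
      (∀ h : G, (φ f₂).coeff (toDual h) ≠ 0 → h ≤ 1) ∧
      (∀ g₁ ∈ F, ∀ g₂ ∈ F, f =ᶠ[atTop] (g₁ + g₂) → φ f = φ g₁ + φ g₂ →
        (∀ h : G, (φ g₁).coeff (toDual h) ≠ 0 → 1 < h) →
        (∀ h : G, (φ g₂).coeff (toDual h) ≠ 0 → h ≤ 1) →
        g₁ =ᶠ[atTop] f₁ ∧ g₂ =ᶠ[atTop] f₂) := by
  intro f hf
  obtain ⟨f₁, hf₁F, hφf₁⟩ := htrunc f hf 1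
  obtain ⟨nf₁, hnf₁F, hnf₁, hφnf₁⟩ := hneg f₁ hf₁F
  obtain ⟨f₂, hf₂F, hf₂, hφf₂⟩ := hadd f hf nf₁ hnf₁F
  have hsplit : φ f = φ f₁ + φ f₂ := by rw [hφf₂, hφnf₁]; abel
  have hsupp₁ : ∀ h : G, (φ f₁).coeff (toDual h) ≠ 0 → 1 < h := fun h hne =>
    by_contra fun hh => hne (by rw [hφf₁ h, if_neg hh])
  have hsupp₂ : ∀ h : G, (φ f₂).coeff (toDual h) ≠ 0 → h ≤ 1 := fun h hne =>
    le_of_not_gt fun hh => hne (by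
      rw [hφf₂, hφnf₁, HahnSeries.coeff_add, HahnSeries.coeff_neg, hφf₁ h, if_pos hh,
        add_neg_cancel])
  refine ⟨f₁, hf₁F, f₂, hf₂F, ?_, hsplit, hsupp₁, hsupp₂, ?_⟩
  · filter_upwards [hf₂, hnf₁] with x h₂ hn
    simp only [Pi.add_apply, Pi.neg_apply] at h₂ hn ⊢
    rw [h₂, hn]
    ring
  · intro g₁ hg₁F g₂ hg₂F _ hφg hg₁ hg₂
    obtain ⟨e₁, e₂⟩ := HahnSeries.eq_and_eq_of_add_eq_add_of_coeff_ne_zero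
      (fun i => 1 < ofDual i) (hφg.symm.trans hsplit)
      (fun i => hg₁ (ofDual i)) (fun i hi => not_lt.mpr (hg₂ (ofDual i) hi))
      (fun i => hsupp₁ (ofDual i)) (fun i hi => not_lt.mpr (hsupp₂ (ofDual i) hi))
    exact ⟨hinj g₁ hg₁F f₁ hf₁F e₁, hinj g₂ hg₂F f₂ hf₂F e₂⟩

/-- Splitting: with `F` and the truncation closed ordered field embedding
`φ : F → ℝ((G))` as in the Embedding Theorem, every `f ∈ F` decomposes uniquely
(as germs) as `f = f_≻ + f_⪯` with `f_≻, f_⪯ ∈ F`, where `φ(f_≻)` is supported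
on monomials `> 1` and `φ(f_⪯)` on monomials `≤ 1`. -/
theorem stmt9 {G : Type*} [CommGroup G] [LinearOrder G] [IsOrderedMonoid G]
    (F : Set (ℝ → ℝ)) (φ : (ℝ → ℝ) → HahnSeries Gᵒᵈ ℝ)
    (hinj : ∀ f ∈ F, ∀ g ∈ F, φ f = φ g → f =ᶠ[atTop] g)
    (hadd : ∀ f ∈ F, ∀ g ∈ F, ∃ h ∈ F, h =ᶠ[atTop] (f + g) ∧ φ h = φ f + φ g)
    (hneg : ∀ f ∈ F, ∃ h ∈ F, h =ᶠ[atTop] (-f) ∧ φ h = -(φ f))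
    (htrunc : ∀ f ∈ F, ∀ g : G, ∃ fg ∈ F, ∀ h : G,
      (φ fg).coeff (toDual h) = if g < h then (φ f).coeff (toDual h) else 0) :
    ∀ f ∈ F, ∃ f₁ ∈ F, ∃ f₂ ∈ F,
      f =ᶠ[atTop] (f₁ + f₂) ∧ φ f = φ f₁ + φ f₂ ∧
      (∀ h : G, (φ f₁).coeff (toDual h) ≠ 0 → 1 < h) ∧
      (∀ h : G, (φ f₂).coeff (toDual h) ≠ 0 → h ≤ 1) ∧
      (∀ g₁ ∈ F, ∀ g₂ ∈ F, f =ᶠ[atTop] (g₁ + g₂) → φ f = φ g₁ + φ g₂ →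
        (∀ h : G, (φ g₁).coeff (toDual h) ≠ 0 → 1 < h) →
        (∀ h : G, (φ g₂).coeff (toDual h) ≠ 0 → h ≤ 1) →
        g₁ =ᶠ[atTop] f₁ ∧ g₂ =ᶠ[atTop] f₂) :=
  stmt9_general F φ hinj hadd hneg htrunc
end

section
/- Let f : (0,ε) → ℝ be the function f(y) = ζ(log(1/y)) where ζ is the Riemann zeta function, defined for log(1/y) > 1. Then f admits the convergent generalized power series expansion f(y) = ∑_{n≥1} y^{log n}, and the additive semigroup of exponents {∑ finite sums of log n : n ≥ 1} ⊆ [0,∞) generated by the support {log n : n ∈ ℕ, n ≥ 1} is not finitely generated as an ℕ-semigroup (equivalently, the support is not contained in any finitely generated ℕ-lattice ∑ᵢ ℕαᵢ). -/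
open Real Finset

-- Part 1 helper: rewrite y ^ log(n+1) as (n+1) ^ (-s) with s = log(1/y)
lemma term_eq (y : ℝ) (hy : 0 < y) (n : ℕ) :
    y ^ Real.log (n + 1) = ((n : ℝ) + 1) ^ (-Real.log (1 / y)) := by
  have hn : (0:ℝ) < (n:ℝ) + 1 := by positivity
  rw [Real.log_div one_ne_zero (ne_of_gt hy), Real.log_one]
  rw [Real.rpow_def_of_pos hy, Real.rpow_def_of_pos hn]
  ring_nf

lemma part1 (y : ℝ) (hy0 : 0 < y) (hy1 : y < Real.exp (-1)) :
    Summable (fun n : ℕ => y ^ Real.log (n + 1)) ∧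
      riemannZeta (Real.log (1 / y)) =
        ((∑' n : ℕ, y ^ Real.log (n + 1) : ℝ) : ℂ) := by
  set s : ℝ := Real.log (1 / y) with hs
  have hs1 : 1 < s := by
    have := Real.log_lt_log hy0 hy1
    rw [Real.log_exp] at this
    have : -Real.log y > 1 := by linarith
    simpa [hs, Real.log_div one_ne_zero (ne_of_gt hy0)] using this
  have hterm : ∀ n : ℕ, y ^ Real.log (n + 1) = ((n : ℝ) + 1) ^ (-s) :=
    fun n => term_eq y hy0 n
  have hsum : Summable (fun n : ℕ => ((n : ℝ) + 1) ^ (-s)) := by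
    have h2 : Summable (fun n : ℕ => ((n : ℝ) ^ s)⁻¹) :=
      Real.summable_nat_rpow_inv.2 hs1
    have := (summable_nat_add_iff 1).2 h2
    refine this.congr fun n => ?_
    rw [← Real.rpow_neg (by positivity)]
    push_cast
    ring_nf
  constructor
  · exact hsum.congr fun n => (hterm n).symm
  · rw [zeta_eq_tsum_one_div_nat_add_one_cpow (by simpa using hs1)]
    rw [Complex.ofReal_tsum]
    congr 1
    ext n
    rw [hterm n]
    have hn : (0:ℝ) ≤ (n:ℝ) + 1 := by positivity
    rw [Real.rpow_neg hn, Complex.ofReal_inv, Complex.ofReal_cpow hn]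
    push_cast
    rw [one_div]

/-- For `0 < y < e⁻¹`, the function `f(y) = ζ(log(1/y))` is given by the
convergent generalized power series `∑_{n≥1} y^{log n}`; moreover the support
`{log n : n ≥ 1}` is not contained in any finitely generated `ℕ`-lattice
`∑ᵢ ℕ·αᵢ` of nonnegative reals. -/
theorem stmt11 :
    (∀ y : ℝ, 0 < y → y < Real.exp (-1) →
      Summable (fun n : ℕ => y ^ Real.log (n + 1)) ∧
      riemannZeta (Real.log (1 / y)) =
        ((∑' n : ℕ, y ^ Real.log (n + 1) : ℝ) : ℂ)) ∧
    ¬ ∃ (k : ℕ) (α : Fin k → ℝ), (∀ i, 0 ≤ α i) ∧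
        ∀ n : ℕ, 1 ≤ n → ∃ c : Fin k → ℕ,
          Real.log n = ∑ i, (c i : ℝ) * α i := by
  constructor
  · exact part1
  · rintro ⟨k, α, hα, hrep⟩
    classical
    set S : Finset (Fin k) := Finset.univ.filter (fun i => 0 < α i) with hS
    by_cases hne : S.Nonempty
    · -- main case: some positive generator
      set m : ℝ := S.inf' hne α with hm
      have hm0 : 0 < m := by
        rw [hm]
        apply (Finset.lt_inf'_iff hne).2
        intro i hi
        exact (Finset.mem_filter.1 hi).2
      have hmle : ∀ i ∈ S, m ≤ α i := fun i hi => Finset.inf'_le α hi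
      -- key counting bound
      have key : ∀ N : ℕ, 1 ≤ N → (N : ℕ) ≤ (⌊Real.log N / m⌋₊ + 1) ^ k := by
        intro N hN
        set B := ⌊Real.log N / m⌋₊ with hB
        set F : ℕ → (Fin k → Fin (B + 1)) := fun n =>
          if h : 1 ≤ n then
            (fun i => ⟨min (Classical.choose (hrep n h) i) B,
              Nat.lt_succ_of_le (min_le_right _ _)⟩)
          else 0 with hF
        have hval : ∀ n : ℕ, 1 ≤ n → n ≤ N →
            Real.log n = ∑ i, ((F n i : ℕ) : ℝ) * α i := by
          intro n h1 h2
          have hc := Classical.choose_spec (hrep n h1)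
          have hlogn : Real.log n ≤ Real.log N :=
            Real.log_le_log (by exact_mod_cast h1) (by exact_mod_cast h2)
          have hbound : ∀ i ∈ S, Classical.choose (hrep n h1) i ≤ B := by
            intro i hi
            have hαi : 0 < α i := (Finset.mem_filter.1 hi).2
            have hterm : (Classical.choose (hrep n h1) i : ℝ) * α i ≤ Real.log n := by
              have hss := Finset.single_le_sum
                (f := fun j => (Classical.choose (hrep n h1) j : ℝ) * α j)
                (fun j _ => mul_nonneg (Nat.cast_nonneg _) (hα j))
                (Finset.mem_univ i)
              linarith [hc, hss]
            have : (Classical.choose (hrep n h1) i : ℝ) ≤ Real.log N / m := by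
              rw [le_div_iff₀ hm0]
              calc (Classical.choose (hrep n h1) i : ℝ) * m
                  ≤ (Classical.choose (hrep n h1) i : ℝ) * α i :=
                    mul_le_mul_of_nonneg_left (hmle i hi) (Nat.cast_nonneg _)
                _ ≤ Real.log n := hterm
                _ ≤ Real.log N := hlogn
            exact Nat.le_floor this
          rw [hF]
          simp only [dif_pos h1]
          refine hc.trans (Finset.sum_congr rfl ?_)
          intro i _
          by_cases hi : i ∈ S
          · rw [min_eq_left (hbound i hi)]
          · have : α i = 0 := by
              have := hα i
              have h2 : ¬ 0 < α i := fun h => hi (Finset.mem_filter.2 ⟨Finset.mem_univ i, h⟩)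
              linarith [lt_or_eq_of_le this |>.resolve_left (fun h => h2 h)]
            simp [this]
        have hinj : Set.InjOn F (Finset.Icc 1 N) := by
          intro a ha b hb hab
          simp only [Finset.coe_Icc, Set.mem_Icc] at ha hb
          have hlog : Real.log a = Real.log b := by
            rw [hval a ha.1 ha.2, hval b hb.1 hb.2, hab]
          have : (a : ℝ) = b := by
            have ha' : (0:ℝ) < a := by exact_mod_cast ha.1
            have hb' : (0:ℝ) < b := by exact_mod_cast hb.1
            rw [← Real.exp_log ha', ← Real.exp_log hb', hlog]
          exact_mod_cast this
        have hcard := Finset.card_le_card_of_injOn F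
          (fun a _ => Finset.mem_univ (F a)) hinj
        simpa [Finset.card_univ, Nat.card_Icc] using hcard
      -- asymptotic contradiction
      set ε : ℝ := m ^ k / (2 * Real.exp m) with hε
      have hε0 : 0 < ε := by positivity
      have hlo := Real.isLittleO_pow_log_id_atTop (n := k)
      have hbd := hlo.def hε0
      rw [Filter.eventually_atTop] at hbd
      obtain ⟨X, hX⟩ := hbd
      set N : ℕ := max 1 ⌈X⌉₊ with hN
      have hN1 : 1 ≤ N := le_max_left _ _
      have hN1' : (1:ℝ) ≤ N := by exact_mod_cast hN1
      have hNX : X ≤ (N : ℝ) := le_trans (Nat.le_ceil X) (by exact_mod_cast le_max_right 1 ⌈X⌉₊)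
      set x : ℝ := N * Real.exp m with hx
      have hexp1 : (1:ℝ) ≤ Real.exp m := Real.one_le_exp (le_of_lt hm0)
      have hx1 : (1:ℝ) ≤ x := by
        calc (1:ℝ) ≤ N := hN1'
        _ ≤ N * Real.exp m := le_mul_of_one_le_right (by linarith) hexp1
      have hxX : X ≤ x := le_trans hNX (le_mul_of_one_le_right (by linarith) hexp1)
      have hlogx : Real.log x = Real.log N + m := by
        rw [hx, Real.log_mul (by positivity) (Real.exp_ne_zero m), Real.log_exp]
      have hlogN0 : 0 ≤ Real.log N := Real.log_nonneg hN1'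
      -- from key:
      have h1 : (N : ℝ) ≤ ((⌊Real.log N / m⌋₊ : ℝ) + 1) ^ k := by
        have := key N hN1
        have : (N : ℝ) ≤ (((⌊Real.log N / m⌋₊ + 1) ^ k : ℕ) : ℝ) := by exact_mod_cast this
        simpa using this
      have h2 : ((⌊Real.log N / m⌋₊ : ℝ) + 1) ≤ Real.log x / m := by
        have hfl : (⌊Real.log N / m⌋₊ : ℝ) ≤ Real.log N / m :=
          Nat.floor_le (by positivity)
        rw [hlogx]
        have heq : (Real.log N + m) / m = Real.log N / m + 1 := by field_simp
        rw [heq]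
        linarith
      have h3 : (N : ℝ) ≤ (Real.log x) ^ k / m ^ k := by
        calc (N : ℝ) ≤ ((⌊Real.log N / m⌋₊ : ℝ) + 1) ^ k := h1
        _ ≤ (Real.log x / m) ^ k := by
            apply pow_le_pow_left₀ (by positivity) h2
        _ = (Real.log x) ^ k / m ^ k := div_pow _ _ _
      have h4 : (Real.log x) ^ k ≤ ε * x := by
        have hlx0 : 0 ≤ Real.log x := Real.log_nonneg hx1
        have := hX x hxX
        simp only [id] at this
        rwa [Real.norm_eq_abs, Real.norm_eq_abs,
          abs_of_nonneg (pow_nonneg hlx0 k),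
          abs_of_nonneg (by linarith : (0:ℝ) ≤ x)] at this
      have h5 : (N : ℝ) ≤ (N : ℝ) / 2 := by
        have hmk : (0:ℝ) < m ^ k := by positivity
        calc (N : ℝ) ≤ (Real.log x) ^ k / m ^ k := h3
        _ ≤ ε * x / m ^ k := by gcongr
        _ = (N : ℝ) / 2 := by
            rw [hε, hx]
            field_simp
      linarith
    · -- degenerate case: all α i = 0
      have hzero : ∀ i, α i = 0 := by
        intro i
        by_contra h
        exact hne ⟨i, Finset.mem_filter.2 ⟨Finset.mem_univ i,
          lt_of_le_of_ne (hα i) (Ne.symm h)⟩⟩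
      obtain ⟨c, hc⟩ := hrep 2 (by norm_num)
      simp only [hzero, mul_zero, Finset.sum_const_zero] at hc
      have : Real.log 2 ≠ 0 := by
        apply Real.log_ne_zero_of_pos_of_ne_one <;> norm_num
      exact this (by exact_mod_cast hc)
end

section
/- Every nonzero generalized power series F ∈ ℝ⟦X₁*,…,Xℓ*⟧ can be written in the form F(X) = X^{α₀}( X^{α₁} B₁(X) + ⋯ + X^{α_s} B_s(X) ) where s ≥ 1, the monomials X^{α₁},…,X^{α_s} have gcd 1 (no common monomial factor) and pairwise do not divide one another, and each Bᵢ is a generalized power series with nonzero constant term. -/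
/-!
The support `S` of `F` lies in a product of well-ordered sets, so by Dickson's lemma it is
partially well-ordered: its minimal elements form a finite antichain `m₁, …, m_s` and every point
of `S` lies above one of them. Assigning each point of `S` to some `m_k` below it splits `F` as
`∑ X^{m_k} B_k`, where `B_k` collects the terms assigned to `m_k`; its constant term is the
coefficient of `X^{m_k}` itself, which is nonzero. Factoring out the componentwise minimum `α₀` of
the `m_k` leaves exponents `α_k = m_k - α₀` with no common monomial factor.
-/

open Finset

theorem Set.IsPWO.exists_fin_antichain_cover {α : Type*} [PartialOrder α] {S : Set α}
    (hS : S.IsPWO) :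
    ∃ (s : ℕ) (m : Fin s → α), (∀ k, m k ∈ S) ∧ (∀ k₁ k₂, m k₁ ≤ m k₂ → k₁ = k₂) ∧
      ∀ r ∈ S, ∃ k, m k ≤ r := by
  obtain ⟨s, m, hinj, hrange⟩ := ((setOfPred_minimal_antichain _).finite_of_partiallyWellOrderedOn
    (hS.mono (setOfPred_minimal_subset _))).fin_param
  have hmin : ∀ k, Minimal (· ∈ S) (m k) := fun k => hrange.subset ⟨k, rfl⟩
  refine ⟨s, m, fun k => (hmin k).prop,
    fun k₁ k₂ hle => hinj ((hmin k₂).eq_of_le (hmin k₁).prop hle), fun r hr => ?_⟩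
  obtain ⟨b, hbr, hb⟩ := hS.exists_le_minimal hr
  obtain ⟨k, rfl⟩ := hrange.superset hb
  exact ⟨k, hbr⟩

theorem Set.IsWF.preimage_add_const {α : Type*} [AddCommGroup α] [LinearOrder α]
    [IsOrderedAddMonoid α] {T : Set α} (hT : T.IsWF) (a : α) : ((· + a) ⁻¹' T).IsWF :=
  (hT.isPWO.image_of_monotone (f := (· - a)) fun _ _ h => sub_le_sub_right h a).isWF.mono
    fun t ht => ⟨t + a, ht, add_sub_cancel_right t a⟩

section ShiftedPart

variable {G R ι : Type*} [AddCommGroup G] [AddCommMonoid R] [DecidableEq ι]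

/-- The terms of `f` that `sel` assigns to the corner `m k`, recentred so that `m k` sits at `0`. -/
def shiftedPart (f : G → R) (m : ι → G) (sel : G → ι) (k : ι) (q : G) : R :=
  if sel (q + m k) = k then f (q + m k) else 0

variable {f : G → R} {m : ι → G} {sel : G → ι} {k : ι} {q : G}

theorem sum_shiftedPart_sub [Fintype ι] (f : G → R) (m : ι → G) (sel : G → ι) (r : G) :
    ∑ k, shiftedPart f m sel k (r - m k) = f r := by
  simp only [shiftedPart, sub_add_cancel, sum_ite_eq, mem_univ, if_true]

theorem shiftedPart_zero (h : sel (m k) = k) : shiftedPart f m sel k 0 = f (m k) := by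
  simp only [shiftedPart, zero_add, h, if_true]

theorem shiftedPart_ne_zero_iff :
    shiftedPart f m sel k q ≠ 0 ↔ sel (q + m k) = k ∧ f (q + m k) ≠ 0 :=
  ite_ne_right_iff

theorem nonneg_of_shiftedPart_ne_zero [PartialOrder G] [IsOrderedAddMonoid G]
    (hsel : ∀ r, f r ≠ 0 → m (sel r) ≤ r) (h : shiftedPart f m sel k q ≠ 0) : 0 ≤ q := by
  obtain ⟨hk, hf⟩ := shiftedPart_ne_zero_iff.1 h
  simpa only [hk, le_add_iff_nonneg_left] using hsel _ hf

end ShiftedPart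

/-- Every nonzero generalized power series `F ∈ ℝ⟦X₁*,…,Xℓ*⟧` (coefficient
function `c`, support in a product of well-ordered subsets of `[0,∞)`) can be
written as `F = X^{α₀}(X^{α₁}B₁ + ⋯ + X^{α_s}B_s)` where the monomials
`X^{αᵢ}` have gcd `1`, pairwise do not divide one another, and each `Bᵢ` is a
generalized power series with nonzero constant term. -/
theorem stmt16 (ℓ : ℕ) (c : (Fin ℓ → ℝ) → ℝ)
    (hne : ∃ r, c r ≠ 0)
    (hsupp : ∃ T : Fin ℓ → Set ℝ,
      (∀ i, (T i).WellFoundedOn (· < ·) ∧ T i ⊆ Set.Ici 0) ∧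
      ∀ r : Fin ℓ → ℝ, c r ≠ 0 → ∀ i, r i ∈ T i) :
    ∃ s : ℕ, 1 ≤ s ∧ ∃ (α₀ : Fin ℓ → ℝ) (αs : Fin s → Fin ℓ → ℝ)
      (B : Fin s → (Fin ℓ → ℝ) → ℝ),
      (∀ i, 0 ≤ α₀ i) ∧ (∀ k i, 0 ≤ αs k i) ∧
      (∀ k₁ k₂ : Fin s, k₁ ≠ k₂ → ¬ ∀ i, αs k₁ i ≤ αs k₂ i) ∧
      (∀ i, ∃ k, αs k i = 0) ∧
      (∀ k, B k 0 ≠ 0) ∧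
      (∀ k, ∀ r : Fin ℓ → ℝ, B k r ≠ 0 → ∀ i, 0 ≤ r i) ∧
      (∀ k, ∃ T : Fin ℓ → Set ℝ,
        (∀ i, (T i).WellFoundedOn (· < ·) ∧ T i ⊆ Set.Ici 0) ∧
        ∀ r : Fin ℓ → ℝ, B k r ≠ 0 → ∀ i, r i ∈ T i) ∧
      ∀ r : Fin ℓ → ℝ, c r = ∑ k, B k (r - α₀ - αs k) := by
  obtain ⟨T, hT, hcT⟩ := hsupp
  obtain ⟨r₀, hr₀⟩ := hne
  have hpwo : {r | c r ≠ 0}.IsPWO :=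
    (Set.IsPWO.pi fun i => Set.IsWF.isPWO (hT i).1).mono fun r hr i _ => hcT r hr i
  obtain ⟨s, m, hmS, hanti, hcover⟩ := hpwo.exists_fin_antichain_cover
  obtain ⟨k₀, -⟩ := hcover r₀ hr₀
  have : Nonempty (Fin s) := ⟨k₀⟩
  choose! sel hsel using hcover
  have hsel_corner : ∀ k, sel (m k) = k := fun k => hanti _ _ (hsel _ (hmS k))
  let α₀ : Fin ℓ → ℝ := fun i => univ.inf' univ_nonempty fun k => m k i
  have hα₀ : ∀ i, ∃ k, α₀ i = m k i := fun i => by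
    obtain ⟨k, -, hk⟩ := exists_mem_eq_inf' univ_nonempty fun k => m k i
    exact ⟨k, hk⟩
  refine ⟨s, k₀.pos, α₀, fun k => m k - α₀, shiftedPart c m sel, ?_, ?_, ?_, ?_, ?_, ?_, ?_, ?_⟩
  · intro i
    obtain ⟨k, hk⟩ := hα₀ i
    exact hk ▸ (hT i).2 (hcT _ (hmS k) i)
  · exact fun k i => sub_nonneg.2 (inf'_le _ (mem_univ k))
  · intro k₁ k₂ hne hle
    exact hne (hanti _ _ fun i => by simpa only [Pi.sub_apply, sub_le_sub_iff_right] using hle i)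
  · intro i
    obtain ⟨k, hk⟩ := hα₀ i
    exact ⟨k, by simp only [Pi.sub_apply, hk, sub_self]⟩
  · intro k
    rw [shiftedPart_zero (hsel_corner k)]
    exact hmS k
  · exact fun k q hq => nonneg_of_shiftedPart_ne_zero hsel hq
  · intro k
    refine ⟨fun i => (· + m k i) ⁻¹' T i ∩ Set.Ici 0,
      fun i => ⟨(Set.IsWF.preimage_add_const (hT i).1 _).mono Set.inter_subset_left,
        Set.inter_subset_right⟩, fun q hq i => ⟨hcT _ (shiftedPart_ne_zero_iff.1 hq).2 i,
        nonneg_of_shiftedPart_ne_zero hsel hq i⟩⟩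
  · simp only [sub_sub_sub_cancel_right, sum_shiftedPart_sub, implies_true]
end

section
/- Let F ∈ ℝ⟦X₁*,…,Xℓ*⟧ be a generalized power series and write F(X) = ∑_{r₁ ∈ [0,∞)} B_{r₁}(X₂,…,Xℓ) X₁^{r₁}. If additionally the support of F is contained in a product of natural subsets of [0,∞) (sets whose intersection with every bounded-above ray is finite), then for every s ∈ [0,∞) there are only finitely many r₁ ≤ s with B_{r₁} ≠ 0, and the truncation ∑_{r₁ > s} B_{r₁}(X₂,…,Xℓ) X₁^{r₁} is again a generalized power series with support in a product of natural sets. -/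
/-- If a generalized power series `F = ∑ B_{r₁}(X₂,…,Xℓ₊₁) X₁^{r₁}` has support
contained in a product of natural subsets of `[0,∞)` (sets meeting every
`(−∞,a)` in a finite set), then for every `s` only finitely many exponents
`r₁ ≤ s` carry a nonzero slice `B_{r₁}`, and the truncation
`∑_{r₁ > s} B_{r₁} X₁^{r₁}` again has support in a product of natural sets. -/
theorem stmt17 (ℓ : ℕ) (c : (Fin (ℓ + 1) → ℝ) → ℝ)
    (hsupp : ∃ T : Fin (ℓ + 1) → Set ℝ,
      (∀ i, (∀ a : ℝ, (T i ∩ Set.Iio a).Finite) ∧ T i ⊆ Set.Ici 0) ∧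
      ∀ r : Fin (ℓ + 1) → ℝ, c r ≠ 0 → ∀ i, r i ∈ T i)
    (s : ℝ) :
    {t : ℝ | t ≤ s ∧ ∃ v : Fin ℓ → ℝ, c (Fin.cons t v) ≠ 0}.Finite ∧
    ∃ T' : Fin (ℓ + 1) → Set ℝ,
      (∀ i, (∀ a : ℝ, (T' i ∩ Set.Iio a).Finite) ∧ T' i ⊆ Set.Ici 0) ∧
      ∀ r : Fin (ℓ + 1) → ℝ, (if s < r 0 then c r else 0) ≠ 0 →
        ∀ i, r i ∈ T' i := by
  obtain ⟨T, hT, hc⟩ := hsupp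
  constructor
  · apply ((hT 0).1 (s + 1)).subset
    rintro t ⟨hts, v, hv⟩
    exact ⟨by simpa using hc _ hv 0, lt_of_le_of_lt hts (by linarith)⟩
  · refine ⟨T, hT, fun r hr i => ?_⟩
    by_cases h : s < r 0
    · exact hc r (by simpa [h] using hr) i
    · simp [h] at hr
end

section
/- In the field of germs at +∞, suppose m₁ ∈ M with m₁ ≺ n₀, f₁ a germ with f₁ ≍ n₁ for some n₁ ≺ n₀, and f a germ with f ≍ n₀ where n₀ ≻ 1 (all comparisons in the valuation order). If additionally log m₁ ≺ n₀ (which holds when m₁ or m₁⁻¹ belongs to a monomial group all of whose elements are ≺ n₀, using log m ≺ m for m ≻ 1), then log m₁ + f₁ + f ≍ n₀; in particular, if m = m₁ e^{f₁} e^{f} and log m < 0 eventually, then log m → −∞ and hence m → 0, i.e., m ≺ 1. -/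
open Filter

/-- Suppose `n₀ ≻ 1` (with `n₀ → +∞`), `m₁ ≺ n₀`, `f₁ ≍ n₁ ≺ n₀`, `f ≍ n₀`,
and `log m₁ ≺ n₀`. Then `log m₁ + f₁ + f ≍ n₀`; in particular, if
`m = m₁ e^{f₁} e^{f}` and eventually `log m < 0`, then `log m → −∞` and hence
`m → 0`, i.e. `m ≺ 1`. -/
theorem stmt19 (m₁ f₁ f n₀ n₁ : ℝ → ℝ)
    (hm₁pos : ∀ᶠ x in atTop, 0 < m₁ x)
    (hn₀ : Tendsto n₀ atTop atTop)
    (hm₁ : Tendsto (fun x => m₁ x / n₀ x) atTop (nhds 0))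
    (hn₁ : Tendsto (fun x => n₁ x / n₀ x) atTop (nhds 0))
    (hf₁ : ∃ c : ℝ, c ≠ 0 ∧ Tendsto (fun x => f₁ x / n₁ x) atTop (nhds c))
    (hf : ∃ c : ℝ, c ≠ 0 ∧ Tendsto (fun x => f x / n₀ x) atTop (nhds c))
    (hlog : Tendsto (fun x => Real.log (m₁ x) / n₀ x) atTop (nhds 0)) :
    (∃ c : ℝ, c ≠ 0 ∧
      Tendsto (fun x => (Real.log (m₁ x) + f₁ x + f x) / n₀ x) atTop (nhds c)) ∧
    ((∀ᶠ x in atTop,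
        Real.log (m₁ x * Real.exp (f₁ x) * Real.exp (f x)) < 0) →
      Tendsto (fun x => Real.log (m₁ x * Real.exp (f₁ x) * Real.exp (f x)))
        atTop atBot ∧
      Tendsto (fun x => m₁ x * Real.exp (f₁ x) * Real.exp (f x))
        atTop (nhds 0)) := by
  obtain ⟨c₁, hc₁, hf₁t⟩ := hf₁
  obtain ⟨c, hc, hft⟩ := hf
  -- eventually n₁ x ≠ 0
  have hne : ∀ᶠ x in atTop, n₁ x ≠ 0 := by
    have := hf₁t.eventually_ne hc₁
    filter_upwards [this] with x hx
    intro h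
    apply hx
    simp [h]
  -- f₁ / n₀ → 0
  have hf₁0 : Tendsto (fun x => f₁ x / n₀ x) atTop (nhds 0) := by
    have hmul : Tendsto (fun x => (f₁ x / n₁ x) * (n₁ x / n₀ x)) atTop (nhds (c₁ * 0)) :=
      hf₁t.mul hn₁
    rw [mul_zero] at hmul
    apply hmul.congr'
    filter_upwards [hne] with x hx
    field_simp
  have hsum : Tendsto (fun x => (Real.log (m₁ x) + f₁ x + f x) / n₀ x) atTop (nhds c) := by
    have : Tendsto (fun x => Real.log (m₁ x) / n₀ x + f₁ x / n₀ x + f x / n₀ x)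
        atTop (nhds (0 + 0 + c)) := (hlog.add hf₁0).add hft
    rw [zero_add, zero_add] at this
    apply this.congr
    intro x
    ring
  refine ⟨⟨c, hc, hsum⟩, ?_⟩
  intro hneg
  -- log (m₁ e^{f₁} e^f) = log m₁ + f₁ + f eventually
  have hlogeq : ∀ᶠ x in atTop,
      Real.log (m₁ x * Real.exp (f₁ x) * Real.exp (f x))
        = Real.log (m₁ x) + f₁ x + f x := by
    filter_upwards [hm₁pos] with x hx
    rw [Real.log_mul (by positivity) (Real.exp_ne_zero _),
      Real.log_mul hx.ne' (Real.exp_ne_zero _), Real.log_exp, Real.log_exp]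
  have hclt : c < 0 := by
    rcases lt_or_gt_of_ne hc with h | h
    · exact h
    · exfalso
      have htop : Tendsto (fun x => (Real.log (m₁ x) + f₁ x + f x)) atTop atTop := by
        have := hsum.pos_mul_atTop h hn₀
        apply this.congr'
        filter_upwards [hn₀.eventually_ne_atTop 0] with x hx
        field_simp
      have h1 : ∀ᶠ x in atTop, (0:ℝ) < Real.log (m₁ x) + f₁ x + f x :=
        htop.eventually_gt_atTop 0
      have h2 : ∀ᶠ x in atTop, Real.log (m₁ x) + f₁ x + f x < 0 := by
        filter_upwards [hneg, hlogeq] with x hx he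
        rwa [he] at hx
      obtain ⟨x, hx1, hx2⟩ := (h1.and h2).exists
      exact absurd hx2 (not_lt.mpr hx1.le)
  have hbot : Tendsto (fun x => (Real.log (m₁ x) + f₁ x + f x)) atTop atBot := by
    have := hsum.neg_mul_atTop hclt hn₀
    apply this.congr'
    filter_upwards [hn₀.eventually_ne_atTop 0] with x hx
    field_simp
  have hbot' : Tendsto (fun x => Real.log (m₁ x * Real.exp (f₁ x) * Real.exp (f x)))
      atTop atBot := hbot.congr' (by filter_upwards [hlogeq] with x h; exact h.symm)
  refine ⟨hbot', ?_⟩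
  have := Real.tendsto_exp_atBot.comp hbot'
  apply this.congr'
  filter_upwards [hm₁pos] with x hx
  simp only [Function.comp]
  rw [Real.exp_log (by positivity)]
end
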